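/- Monotone convergence theorem (bounded, decreasing): under the same setting, if X_m ↓ X pointwise with all X_m and X uniformly bounded, then sup_{P∈P} E_P[X_m] ↓ sup_{P∈P} E_P[X]. -/

import Mathlib

/-!
On a finite set `K` a pointwise convergent sequence converges uniformly, and uniform tightness
makes the mass of `Kᶜ` uniformly small; as the functions are bounded, this gives
`E_P[X_m] - E_P[X] → 0` uniformly in `P`, and a supremum moves by at most the uniform distance
between the families it is taken over.
-/

open MeasureTheory Filter

lemma sSup_image_le_sSup_image_add {α : Type*} {s : Set α} (hs : s.Nonempty) {f g : α → ℝ}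
    (hg : BddAbove (g '' s)) {c : ℝ} (hfg : ∀ a ∈ s, f a ≤ g a + c) :
    sSup (f '' s) ≤ sSup (g '' s) + c := by
  refine csSup_le (hs.image f) ?_
  rintro _ ⟨a, ha, rfl⟩
  exact (hfg a ha).trans (add_le_add_left (le_csSup hg ⟨a, ha, rfl⟩) c)

section

variable {Ω : Type*} [MeasurableSpace Ω]

lemma integrable_of_abs_le [DiscreteMeasurableSpace Ω] (P : Measure Ω) [IsFiniteMeasure P]
    {f : Ω → ℝ} {C : ℝ} (hf : ∀ ω, |f ω| ≤ C) : Integrable f P :=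
  .of_bound (Measurable.of_discrete).aestronglyMeasurable C (ae_of_all _ hf)

lemma integral_le_of_abs_le (P : Measure Ω) [IsProbabilityMeasure P] {f : Ω → ℝ} {C : ℝ}
    (hf : ∀ ω, |f ω| ≤ C) : ∫ ω, f ω ∂P ≤ C := by
  have h := norm_integral_le_of_norm_le_const (μ := P) (f := f) (ae_of_all P hf)
  simp only [Real.norm_eq_abs, probReal_univ, mul_one] at h
  exact (le_abs_self _).trans h

lemma bddAbove_integral_image {Ps : Set (Measure Ω)} (hprob : ∀ P ∈ Ps, IsProbabilityMeasure P)
    {f : Ω → ℝ} {C : ℝ} (hf : ∀ ω, |f ω| ≤ C) :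
    BddAbove ((fun P => ∫ ω, f ω ∂P) '' Ps) := by
  refine ⟨C, ?_⟩
  rintro _ ⟨P, hP, rfl⟩
  have := hprob P hP
  exact integral_le_of_abs_le P hf

lemma sSup_integral_image_mono [DiscreteMeasurableSpace Ω] {Ps : Set (Measure Ω)}
    (hPs : Ps.Nonempty) (hprob : ∀ P ∈ Ps, IsProbabilityMeasure P) {f g : Ω → ℝ} {C : ℝ}
    (hf : ∀ ω, |f ω| ≤ C) (hg : ∀ ω, |g ω| ≤ C) (hfg : f ≤ g) :
    sSup ((fun P => ∫ ω, f ω ∂P) '' Ps) ≤ sSup ((fun P => ∫ ω, g ω ∂P) '' Ps) := by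
  have hle : ∀ P ∈ Ps, ∫ ω, f ω ∂P ≤ ∫ ω, g ω ∂P + 0 := fun P hP => by
    have := hprob P hP
    simpa using integral_mono (integrable_of_abs_le P hf) (integrable_of_abs_le P hg) hfg
  simpa using sSup_image_le_sSup_image_add hPs (bddAbove_integral_image hprob hg) hle

lemma integral_le_add_mul_measureReal_compl {P : Measure Ω} [IsProbabilityMeasure P]
    {s : Set Ω} (hs : MeasurableSet s) {f : Ω → ℝ} (hf : Integrable f P) {δ B : ℝ}
    (hδ : 0 ≤ δ) (hfs : ∀ ω ∈ s, f ω ≤ δ) (hfB : ∀ ω, f ω ≤ B) :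
    ∫ ω, f ω ∂P ≤ δ + B * P.real sᶜ := by
  have hind : Integrable (sᶜ.indicator fun _ => B) P := (integrable_const B).indicator hs.compl
  have hpt : ∀ ω, f ω ≤ δ + sᶜ.indicator (fun _ => B) ω := by
    intro ω
    by_cases hω : ω ∈ s
    · simpa [hω] using hfs ω hω
    · simpa [hω] using (hfB ω).trans (le_add_of_nonneg_left hδ)
  calc ∫ ω, f ω ∂P ≤ ∫ ω, δ + sᶜ.indicator (fun _ => B) ω ∂P :=
        integral_mono hf ((integrable_const δ).add hind) hpt
    _ = δ + B * P.real sᶜ := by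
        rw [integral_add (integrable_const δ) hind, integral_const,
          integral_indicator_const _ hs.compl]
        simp [mul_comm]

lemma eventually_forall_integral_le_of_tendsto_zero [DiscreteMeasurableSpace Ω]
    {Ps : Set (Measure Ω)} (hprob : ∀ P ∈ Ps, IsProbabilityMeasure P)
    (htight : ∀ ε : ℝ, 0 < ε → ∃ K : Finset Ω,
      ∀ P ∈ Ps, P ((↑K : Set Ω)ᶜ) < ENNReal.ofReal ε)
    {g : ℕ → Ω → ℝ} {B : ℝ} (hgB : ∀ m ω, |g m ω| ≤ B)
    (hg : ∀ ω, Tendsto (fun m => g m ω) atTop (nhds 0)) {ε : ℝ} (hε : 0 < ε) :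
    ∀ᶠ m in atTop, ∀ P ∈ Ps, ∫ ω, g m ω ∂P ≤ ε := by
  obtain ⟨η, hη, hBη⟩ := exists_pos_mul_lt (half_pos hε) |B|
  obtain ⟨K, hK⟩ := htight η hη
  have hsmall : ∀ᶠ m in atTop, ∀ ω ∈ K, g m ω ≤ ε / 2 :=
    K.eventually_all.2 fun ω _ => (hg ω).eventually (eventually_le_nhds (half_pos hε))
  filter_upwards [hsmall] with m hm P hP
  have := hprob P hP
  have hKc : P.real (↑K : Set Ω)ᶜ < η := ENNReal.toReal_lt_of_lt_ofReal (hK P hP)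
  calc ∫ ω, g m ω ∂P ≤ ε / 2 + B * P.real (↑K : Set Ω)ᶜ :=
        integral_le_add_mul_measureReal_compl K.measurableSet (integrable_of_abs_le P (hgB m))
          (half_pos hε).le hm fun ω => (abs_le.1 (hgB m ω)).2
    _ ≤ ε / 2 + |B| * η := by
        gcongr ε / 2 + ?_
        exact (mul_le_mul_of_nonneg_right (le_abs_self B) measureReal_nonneg).trans
          (mul_le_mul_of_nonneg_left hKc.le (abs_nonneg B))
    _ ≤ ε := by linarith

end

/-- Monotone convergence theorem (bounded, decreasing) for the sublinear
expectation over a uniformly tight family: if `X_m ↓ X` pointwise with all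
functions uniformly bounded, then `E[X_m] ↓ E[X]`. -/
theorem monotone_convergence_decreasing
    (Ps : Set (Measure ℕ)) (hPs : Ps.Nonempty)
    (hprob : ∀ P ∈ Ps, IsProbabilityMeasure P)
    (htight : ∀ ε : ℝ, 0 < ε → ∃ K : Finset ℕ,
      ∀ P ∈ Ps, P ((↑K : Set ℕ)ᶜ) < ENNReal.ofReal ε)
    (X : ℕ → ℕ → ℝ) (Xlim : ℕ → ℝ) (C : ℝ)
    (hbd : ∀ m ω, |X m ω| ≤ C) (hbdlim : ∀ ω, |Xlim ω| ≤ C)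
    (hanti : ∀ ω, Antitone fun m => X m ω)
    (hconv : ∀ ω, Tendsto (fun m => X m ω) atTop (nhds (Xlim ω))) :
    (Antitone fun m => sSup ((fun P => ∫ ω, X m ω ∂P) '' Ps)) ∧
      Tendsto (fun m => sSup ((fun P => ∫ ω, X m ω ∂P) '' Ps)) atTop
        (nhds (sSup ((fun P => ∫ ω, Xlim ω ∂P) '' Ps))) := by
  refine ⟨fun m n hmn =>
    sSup_integral_image_mono hPs hprob (hbd n) (hbd m) fun ω => hanti ω hmn, ?_⟩
  set L := sSup ((fun P => ∫ ω, Xlim ω ∂P) '' Ps)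
  have hlower : ∀ m, L ≤ sSup ((fun P => ∫ ω, X m ω ∂P) '' Ps) := fun m =>
    sSup_integral_image_mono hPs hprob hbdlim (hbd m) fun ω =>
      (hanti ω).le_of_tendsto (hconv ω) m
  have hupper : ∀ ε > 0, ∀ᶠ m in atTop,
      sSup ((fun P => ∫ ω, X m ω ∂P) '' Ps) ≤ L + ε := by
    intro ε hε
    have hdiff : ∀ ω, Tendsto (fun m => X m ω - Xlim ω) atTop (nhds 0) := fun ω => by
      simpa using (hconv ω).sub_const (Xlim ω)
    have hdiffB : ∀ m ω, |X m ω - Xlim ω| ≤ C + C := fun m ω =>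
      (abs_sub _ _).trans (add_le_add (hbd m ω) (hbdlim ω))
    filter_upwards [eventually_forall_integral_le_of_tendsto_zero hprob htight hdiffB hdiff hε]
      with m hm
    refine sSup_image_le_sSup_image_add hPs (bddAbove_integral_image hprob hbdlim) fun P hP => ?_
    have := hprob P hP
    have hPm := hm P hP
    rw [integral_sub (integrable_of_abs_le P (hbd m)) (integrable_of_abs_le P hbdlim)] at hPm
    linarith
  refine tendsto_order.2
    ⟨fun a ha => .of_forall fun m => ha.trans_le (hlower m), fun b hb => ?_⟩
  filter_upwards [hupper ((b - L) / 2) (by linarith)] with m hm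
  linarith
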